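/- Let R be a commutative ring, V an R-module, and φ_1, φ_2, φ_3, φ_4: V → R four R-linear maps. Define the alternating 4-linear form Λ(x_1,x_2,x_3,x_4) = det((φ_p(x_q))_{1≤p,q≤4}). Then for all a, b, c, a', b', c' ∈ V: Λ(b,c,b',c')·Λ(a,c,a',c')·Λ(a,b,a',b') + Λ(b,c,a',c')·Λ(a,c,a',b')·Λ(a,b,b',c') + Λ(b,c,a',b')·Λ(a,c,b',c')·Λ(a,b,a',c') − Λ(b,c,b',c')·Λ(a,c,a',b')·Λ(a,b,a',c') − Λ(b,c,a',b')·Λ(a,c,a',c')·Λ(a,b,b',c') − Λ(b,c,a',c')·Λ(a,c,b',c')·Λ(a,b,a',b') = 0. -/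

import Mathlib

private def D4 {R : Type*} [CommRing R] (x y z w : Fin 4 → R) : R :=
  x 0 * y 1 * z 2 * w 3 -
    x 0 * y 1 * z 3 * w 2 -
    x 0 * y 2 * z 1 * w 3 +
    x 0 * y 2 * z 3 * w 1 +
    x 0 * y 3 * z 1 * w 2 -
    x 0 * y 3 * z 2 * w 1 -
    x 1 * y 0 * z 2 * w 3 +
    x 1 * y 0 * z 3 * w 2 +
    x 1 * y 2 * z 0 * w 3 -
    x 1 * y 2 * z 3 * w 0 -
    x 1 * y 3 * z 0 * w 2 +
    x 1 * y 3 * z 2 * w 0 +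
    x 2 * y 0 * z 1 * w 3 -
    x 2 * y 0 * z 3 * w 1 -
    x 2 * y 1 * z 0 * w 3 +
    x 2 * y 1 * z 3 * w 0 +
    x 2 * y 3 * z 0 * w 1 -
    x 2 * y 3 * z 1 * w 0 -
    x 3 * y 0 * z 1 * w 2 +
    x 3 * y 0 * z 2 * w 1 +
    x 3 * y 1 * z 0 * w 2 -
    x 3 * y 1 * z 2 * w 0 -
    x 3 * y 2 * z 0 * w 1 +
    x 3 * y 2 * z 1 * w 0

set_option maxHeartbeats 2000000 in
private lemma det_eq_D4 {R : Type*} [CommRing R] (M : Matrix (Fin 4) (Fin 4) R) :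
    M.det = D4 (fun i => M i 0) (fun i => M i 1) (fun i => M i 2) (fun i => M i 3) := by
  simp only [D4]
  simp [Matrix.det_succ_row_zero, Fin.sum_univ_succ, Fin.succAbove, Matrix.submatrix_apply,
    show (Fin.succ 2 : Fin 4) = 3 from rfl, show (Fin.castSucc 2 : Fin 4) = 2 from rfl,
    show ((1 : Fin 4) < 3) from by decide]
  ring

set_option maxHeartbeats 4000000 in
private lemma key1 {R : Type*} [CommRing R] (a b c a' b' c' : Fin 4 → R) :
    D4 b c b' c' * D4 a b c a' - D4 b c a' c' * D4 a b c b' + D4 b c a' b' * D4 a b c c' = 0 := by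
  simp only [D4]; ring

set_option maxHeartbeats 4000000 in
private lemma key2 {R : Type*} [CommRing R] (a b c a' b' c' : Fin 4 → R) :
    D4 a c b' c' * D4 a b c a' - D4 a c a' c' * D4 a b c b' + D4 a c a' b' * D4 a b c c' = 0 := by
  simp only [D4]; ring

set_option maxHeartbeats 4000000 in
private lemma key3 {R : Type*} [CommRing R] (a b c a' b' c' : Fin 4 → R) :
    D4 a b b' c' * D4 a b c a' - D4 a b a' c' * D4 a b c b' + D4 a b a' b' * D4 a b c c' = 0 := by
  simp only [D4]; ring

private lemma elim3 {R : Type*} [CommRing R]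
    (m11 m12 m13 m21 m22 m23 m31 m32 m33 p q r : R)
    (h1 : m11 * p - m12 * q + m13 * r = 0)
    (h2 : m21 * p - m22 * q + m23 * r = 0)
    (h3 : m31 * p - m32 * q + m33 * r = 0) :
    (m11 * m22 * m33 + m12 * m23 * m31 + m13 * m21 * m32 -
      m11 * m23 * m32 - m13 * m22 * m31 - m12 * m21 * m33) * p = 0 := by
  linear_combination (m22 * m33 - m23 * m32) * h1 + (m13 * m32 - m12 * m33) * h2 +
    (m12 * m23 - m13 * m22) * h3

private abbrev P24 : Type := MvPolynomial (Fin 6 × Fin 4) ℤ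

private noncomputable def V6 (v : Fin 6) : Fin 4 → P24 := fun i => MvPolynomial.X (v, i)

set_option maxHeartbeats 4000000 in
private lemma p_ne_zero : D4 (V6 0) (V6 1) (V6 2) (V6 3) ≠ 0 := by
  intro h
  have h1 : MvPolynomial.eval (fun p : Fin 6 × Fin 4 => if (p.1 : ℕ) = (p.2 : ℕ) then (1 : ℤ) else 0)
      (D4 (V6 0) (V6 1) (V6 2) (V6 3)) = 1 := by
    simp only [D4, V6, map_add, map_sub, map_mul, MvPolynomial.eval_X]
    decide
  rw [h] at h1
  simp at h1

set_option maxHeartbeats 4000000 in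
private lemma poly_plucker :
    D4 (V6 1) (V6 2) (V6 4) (V6 5) * D4 (V6 0) (V6 2) (V6 3) (V6 5) * D4 (V6 0) (V6 1) (V6 3) (V6 4) +
      D4 (V6 1) (V6 2) (V6 3) (V6 5) * D4 (V6 0) (V6 2) (V6 3) (V6 4) * D4 (V6 0) (V6 1) (V6 4) (V6 5) +
      D4 (V6 1) (V6 2) (V6 3) (V6 4) * D4 (V6 0) (V6 2) (V6 4) (V6 5) * D4 (V6 0) (V6 1) (V6 3) (V6 5) -
      D4 (V6 1) (V6 2) (V6 4) (V6 5) * D4 (V6 0) (V6 2) (V6 3) (V6 4) * D4 (V6 0) (V6 1) (V6 3) (V6 5) -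
      D4 (V6 1) (V6 2) (V6 3) (V6 4) * D4 (V6 0) (V6 2) (V6 3) (V6 5) * D4 (V6 0) (V6 1) (V6 4) (V6 5) -
      D4 (V6 1) (V6 2) (V6 3) (V6 5) * D4 (V6 0) (V6 2) (V6 4) (V6 5) * D4 (V6 0) (V6 1) (V6 3) (V6 4) = 0 := by
  have h := elim3
    (D4 (V6 1) (V6 2) (V6 4) (V6 5)) (D4 (V6 1) (V6 2) (V6 3) (V6 5)) (D4 (V6 1) (V6 2) (V6 3) (V6 4))
    (D4 (V6 0) (V6 2) (V6 4) (V6 5)) (D4 (V6 0) (V6 2) (V6 3) (V6 5)) (D4 (V6 0) (V6 2) (V6 3) (V6 4))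
    (D4 (V6 0) (V6 1) (V6 4) (V6 5)) (D4 (V6 0) (V6 1) (V6 3) (V6 5)) (D4 (V6 0) (V6 1) (V6 3) (V6 4))
    (D4 (V6 0) (V6 1) (V6 2) (V6 3)) (D4 (V6 0) (V6 1) (V6 2) (V6 4)) (D4 (V6 0) (V6 1) (V6 2) (V6 5))
    (key1 (V6 0) (V6 1) (V6 2) (V6 3) (V6 4) (V6 5))
    (key2 (V6 0) (V6 1) (V6 2) (V6 3) (V6 4) (V6 5))
    (key3 (V6 0) (V6 1) (V6 2) (V6 3) (V6 4) (V6 5))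
  rcases mul_eq_zero.mp h with h' | h'
  · exact h'
  · exact absurd h' p_ne_zero

set_option maxHeartbeats 4000000 in
private lemma scalar_plucker {R : Type*} [CommRing R] (a b c a' b' c' : Fin 4 → R) :
    D4 b c b' c' * D4 a c a' c' * D4 a b a' b' +
      D4 b c a' c' * D4 a c a' b' * D4 a b b' c' +
      D4 b c a' b' * D4 a c b' c' * D4 a b a' c' -
      D4 b c b' c' * D4 a c a' b' * D4 a b a' c' -
      D4 b c a' b' * D4 a c a' c' * D4 a b b' c' -
      D4 b c a' c' * D4 a c b' c' * D4 a b a' b' = 0 := by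
  have h := congrArg (MvPolynomial.aeval
    (fun p : Fin 6 × Fin 4 => (![a, b, c, a', b', c'] p.1) p.2) : P24 →ₐ[ℤ] R) poly_plucker
  simpa only [D4, V6, map_add, map_sub, map_mul, map_zero, MvPolynomial.aeval_X,
    Matrix.cons_val_zero, Matrix.cons_val_one, Matrix.head_cons, Matrix.cons_val_two,
    Matrix.tail_cons, Matrix.cons_val_three, Matrix.cons_val_four, Matrix.head_fin_const,
    Matrix.cons_val', Matrix.cons_val_fin_one, Matrix.empty_val', Matrix.cons_val] using h

set_option maxHeartbeats 4000000 in
theorem plucker_identity_for_alternating_four_form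
    {R : Type*} [CommRing R] {V : Type*} [AddCommGroup V] [Module R V]
    (φ : Fin 4 → V →ₗ[R] R) (Λ : V → V → V → V → R)
    (hΛ : ∀ x₁ x₂ x₃ x₄ : V,
      Λ x₁ x₂ x₃ x₄ =
        Matrix.det (Matrix.of fun p q : Fin 4 => φ p (![x₁, x₂, x₃, x₄] q)))
    (a b c a' b' c' : V) :
    Λ b c b' c' * Λ a c a' c' * Λ a b a' b' +
        Λ b c a' c' * Λ a c a' b' * Λ a b b' c' +
        Λ b c a' b' * Λ a c b' c' * Λ a b a' c' -
        Λ b c b' c' * Λ a c a' b' * Λ a b a' c' -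
        Λ b c a' b' * Λ a c a' c' * Λ a b b' c' -
        Λ b c a' c' * Λ a c b' c' * Λ a b a' b' = 0 := by
  have hD : ∀ x₁ x₂ x₃ x₄ : V, Λ x₁ x₂ x₃ x₄ =
      D4 (fun i => φ i x₁) (fun i => φ i x₂) (fun i => φ i x₃) (fun i => φ i x₄) := by
    intro x₁ x₂ x₃ x₄
    rw [hΛ, det_eq_D4]
    simp [Matrix.of_apply]
  simp only [hD]
  exact scalar_plucker (fun i => φ i a) (fun i => φ i b) (fun i => φ i c)
    (fun i => φ i a') (fun i => φ i b') (fun i => φ i c')
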